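/- If a polygon has an Aleksandrov gluing in which the gluing tree is a path ('|' shape), then the polygon's perimeter is split by the two endpoint fold/leaf points into two arcs of equal length, and the gluing is exactly the identification of these two arcs by arc length (i.e., every path-type gluing is a perimeter-halving gluing, possibly with endpoints at vertices). -/
import Mathlib


open Real Set

noncomputable section

/-- Abstract model of a polygon via its boundary: the circle `ℝ / Lℤ` of perimeter `L`
(parametrised by arc length), a finite set of vertices, and an interior-angle function
which equals `π` at every non-vertex boundary point. -/
structure AbstractPolygon where
  L : ℝ
  Lpos : 0 < L
  V : Set (AddCircle L)
  Vfin : V.Finite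
  angle : AddCircle L → ℝ
  angle_pos : ∀ p, 0 < angle p
  angle_lt : ∀ p, angle p < 2 * π
  nonvertex_angle : ∀ p, p ∉ V → angle p = π

/-- Convexity: every interior angle is at most `π`. -/
def AbstractPolygon.IsConvex (P : AbstractPolygon) : Prop := ∀ p, P.angle p ≤ π

/-- The set of boundary points identified with `p` by the gluing `s`. -/
def glueClass {L : ℝ} (s : Setoid (AddCircle L)) (p : AddCircle L) : Set (AddCircle L) :=
  {q | s.r p q}

/-- The total face angle glued together at the identified point of `p`. -/
def gluedAngle (P : AbstractPolygon) (s : Setoid (AddCircle P.L)) (p : AddCircle P.L) : ℝ :=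
  ∑ᶠ q ∈ glueClass s p, P.angle q

/-- A gluing is length preserving: each identification extends locally by arc length
(on each side, possibly reversing orientation). -/
def LengthPreserving {L : ℝ} (s : Setoid (AddCircle L)) : Prop :=
  ∀ p q : AddCircle L, s.r p q →
    ∃ ε > (0 : ℝ),
      (∀ t : ℝ, 0 < t → t < ε →
        s.r (p + (t : AddCircle L)) (q + (t : AddCircle L)) ∨
        s.r (p + (t : AddCircle L)) (q - (t : AddCircle L))) ∧
      (∀ t : ℝ, 0 < t → t < ε →
        s.r (p - (t : AddCircle L)) (q + (t : AddCircle L)) ∨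
        s.r (p - (t : AddCircle L)) (q - (t : AddCircle L)))

/-- The two-complex obtained from the gluing: the polygon is a topological disk,
modelled as the cone over its boundary circle, and its boundary is glued via `s`. -/
def complexSetoid (L : ℝ) (s : Setoid (AddCircle L)) :
    Setoid (AddCircle L × unitInterval) :=
  Relation.EqvGen.setoid (fun a b =>
    (a.2 = 1 ∧ b.2 = 1 ∧ s.r a.1 b.1) ∨ (a.2 = 0 ∧ b.2 = 0))

/-- Aleksandrov's second condition: the glued complex is homeomorphic to the 2-sphere. -/
def SphereComplex (P : AbstractPolygon) (s : Setoid (AddCircle P.L)) : Prop :=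
  Nonempty (Quotient (complexSetoid P.L s) ≃ₜ
    Metric.sphere (0 : EuclideanSpace ℝ (Fin 3)) 1)

/-- An Aleksandrov gluing: a length-preserving self-identification of the boundary,
gluing at most `2π` of face angle at every point, whose complex is a sphere. -/
structure IsAleksandrovGluing (P : AbstractPolygon) (s : Setoid (AddCircle P.L)) : Prop where
  length_preserving : LengthPreserving s
  classes_finite : ∀ p, (glueClass s p).Finite
  angle_le : ∀ p, gluedAngle P s p ≤ 2 * π
  sphere : SphereComplex P s

/-- A leaf of the gluing tree: an identified point at which the boundary folds back on
itself, i.e. the two sides of `p` are glued to each other near `p`. -/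
def IsLeafClass {L : ℝ} (s : Setoid (AddCircle L)) (p : AddCircle L) : Prop :=
  ∃ ε > (0 : ℝ), ∀ t : ℝ, 0 < t → t < ε →
    s.r (p + (t : AddCircle L)) (p - (t : AddCircle L))

/-- The gluing tree of `s` has exactly `lam` leaves: a set of `lam` pairwise
non-identified leaf points meeting every leaf class. -/
def HasLeaves (P : AbstractPolygon) (s : Setoid (AddCircle P.L)) (lam : ℕ) : Prop :=
  ∃ T : Finset (AddCircle P.L),
    (∀ p ∈ T, IsLeafClass s p) ∧
    (∀ p ∈ T, ∀ q ∈ T, s.r p q → p = q) ∧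
    (∀ p, IsLeafClass s p → ∃ q ∈ T, s.r p q) ∧
    T.card = lam

/-- The two "ends" (sides) of a glued boundary point: `(q, true)` is the forward side of
`q`, `(q, false)` its backward side. -/
def glueEnds {L : ℝ} (s : Setoid (AddCircle L)) (p : AddCircle L) :
    Set (AddCircle L × Bool) :=
  {e | e.1 ∈ glueClass s p}

/-- The point at arc length `t` along the side `e`. -/
def endDir {L : ℝ} (e : AddCircle L × Bool) (t : ℝ) : AddCircle L :=
  if e.2 then e.1 + (t : AddCircle L) else e.1 - (t : AddCircle L)

/-- Two sides are identified by the gluing when they are glued to each other near their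
base points. -/
def EndRel {L : ℝ} (s : Setoid (AddCircle L)) (e f : AddCircle L × Bool) : Prop :=
  ∃ ε > (0 : ℝ), ∀ t : ℝ, 0 < t → t < ε → s.r (endDir e t) (endDir f t)

/-- The degree of the gluing-tree node at `p`: the number of classes of identified sides
emanating from the node, i.e. the number of incident tree edges. -/
def treeDegree {L : ℝ} (s : Setoid (AddCircle L)) (p : AddCircle L) : ℕ :=
  Set.ncard {C : Set (AddCircle L × Bool) |
    ∃ e ∈ glueEnds s p, C = {f | f ∈ glueEnds s p ∧ EndRel s e f}}

section AuxLemmas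

lemma unit_one_ne_zero : (1 : unitInterval) ≠ 0 := by norm_num

lemma eqvgen_level1 {L : ℝ} (s : Setoid (AddCircle L)) (p q : AddCircle L) :
    (complexSetoid L s).r (p, (1 : unitInterval)) (q, (1 : unitInterval)) ↔ s.r p q := by
  constructor
  · intro hpq
    have key : ∀ x y : AddCircle L × unitInterval,
        Relation.EqvGen (fun a b => (a.2 = 1 ∧ b.2 = 1 ∧ s.r a.1 b.1) ∨ (a.2 = 0 ∧ b.2 = 0)) x y →
        ((x.2 = 1 ∧ y.2 = 1 ∧ s.r x.1 y.1) ∨ (x.2 = 0 ∧ y.2 = 0) ∨ x = y) := by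
      intro x y hxy
      induction hxy with
      | rel a b hab =>
        rcases hab with h1 | h2
        · exact Or.inl h1
        · exact Or.inr (Or.inl h2)
      | refl a => exact Or.inr (Or.inr rfl)
      | symm a b _ ih =>
        rcases ih with ⟨h1, h2, h3⟩ | hz | rfl
        · exact Or.inl ⟨h2, h1, s.iseqv.symm h3⟩
        · exact Or.inr (Or.inl ⟨hz.2, hz.1⟩)
        · exact Or.inr (Or.inr rfl)
      | trans a b c _ _ ih1 ih2 =>
        rcases ih1 with ⟨h1, h2, h3⟩ | hz | rfl
        · rcases ih2 with ⟨h1', h2', h3'⟩ | hz' | rfl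
          · exact Or.inl ⟨h1, h2', s.iseqv.trans h3 h3'⟩
          · exact absurd (h2.symm.trans hz'.1) unit_one_ne_zero
          · exact Or.inl ⟨h1, h2, h3⟩
        · rcases ih2 with ⟨h1', h2', h3'⟩ | hz' | rfl
          · exact absurd (h1'.symm.trans hz.2) unit_one_ne_zero
          · exact Or.inr (Or.inl ⟨hz.1, hz'.2⟩)
          · exact Or.inr (Or.inl hz)
        · exact ih2
    have := key _ _ hpq
    rcases this with ⟨_, _, h3⟩ | hz | heq
    · exact h3
    · exact absurd hz.1 unit_one_ne_zero
    · have : p = q := congrArg Prod.fst heq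
      exact this ▸ s.iseqv.refl p
  · intro hpq
    exact Relation.EqvGen.rel _ _ (Or.inl ⟨rfl, rfl, hpq⟩)

lemma srel_isClosed (P : AbstractPolygon) (s : Setoid (AddCircle P.L))
    (hs : SphereComplex P s) :
    IsClosed {pr : AddCircle P.L × AddCircle P.L | s.r pr.1 pr.2} := by
  obtain ⟨e⟩ := hs
  haveI : T2Space (Quotient (complexSetoid P.L s)) := e.isEmbedding.t2Space
  have hq : Continuous (fun x : AddCircle P.L × unitInterval =>
      Quotient.mk (complexSetoid P.L s) x) := continuous_quot_mk
  have hf : Continuous (fun p : AddCircle P.L =>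
      Quotient.mk (complexSetoid P.L s) (p, (1:unitInterval))) :=
    hq.comp (continuous_id.prodMk continuous_const)
  have hset : {pr : AddCircle P.L × AddCircle P.L | s.r pr.1 pr.2} =
      (fun pr : AddCircle P.L × AddCircle P.L =>
        (Quotient.mk (complexSetoid P.L s) (pr.1, (1:unitInterval)),
         Quotient.mk (complexSetoid P.L s) (pr.2, (1:unitInterval)))) ⁻¹'
      (Set.diagonal (Quotient (complexSetoid P.L s))) := by
    ext pr
    simp only [Set.mem_setOf_eq, Set.mem_preimage, Set.mem_diagonal_iff]
    constructor
    · intro hr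
      exact Quotient.sound ((eqvgen_level1 s pr.1 pr.2).mpr hr)
    · intro hr
      exact (eqvgen_level1 s pr.1 pr.2).mp (Quotient.exact hr)
  rw [hset]
  exact isClosed_diagonal.preimage ((hf.comp continuous_fst).prodMk (hf.comp continuous_snd))

end AuxLemmas
section AuxLemmas2

lemma coe_sub_eq_zero' {L : ℝ} (hL : 0 < L) {u v : ℝ}
    (h : ((u - v : ℝ) : AddCircle L) = 0) (hsm : |u - v| < L) : u = v := by
  rw [AddCircle.coe_eq_zero_iff] at h
  obtain ⟨n, hn⟩ := h
  rw [zsmul_eq_mul] at hn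
  rcases eq_or_ne n 0 with rfl | hn0
  · push_cast at hn; linarith [abs_nonneg (u - v), hn]
  · have h1 : (1:ℝ) ≤ |(n:ℝ)| := by exact_mod_cast Int.one_le_abs hn0
    have h2 : |(n:ℝ) * L| = |(n:ℝ)| * L := by rw [abs_mul, abs_of_pos hL]
    rw [hn] at h2
    nlinarith [abs_nonneg (u - v)]

lemma coe_ne_zero' {L : ℝ} (hL : 0 < L) {x : ℝ} (h0 : 0 < x) (hx : x < L) :
    (x : AddCircle L) ≠ 0 := by
  intro hc
  have : ((x - 0 : ℝ) : AddCircle L) = 0 := by rw [sub_zero]; exact hc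
  have := coe_sub_eq_zero' hL this (by rw [sub_zero, abs_of_pos h0]; exact hx)
  linarith

lemma eq_of_sub_eq_sub' {G : Type*} [AddCommGroup G] {u v x y : G}
    (h : x = y) (hid : u - v = x - y) : u = v := by
  rw [h, sub_self] at hid; exact sub_eq_zero.mp hid

lemma three_class (P : AbstractPolygon) (s : Setoid (AddCircle P.L))
    (h : IsAleksandrovGluing P s) {z1 z2 z3 : AddCircle P.L}
    (h12 : s.r z1 z2) (h13 : s.r z1 z3)
    (d12 : z1 ≠ z2) (d13 : z1 ≠ z3) (d23 : z2 ≠ z3) :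
    z1 ∈ P.V ∨ z2 ∈ P.V ∨ z3 ∈ P.V := by
  by_contra hcon
  push_neg at hcon
  obtain ⟨hv1, hv2, hv3⟩ := hcon
  have hfin := h.classes_finite z1
  have hle := h.angle_le z1
  have hsub : ({z1, z2, z3} : Finset (AddCircle P.L)) ⊆ hfin.toFinset := by
    intro z hz
    rw [Set.Finite.mem_toFinset]
    simp only [Finset.mem_insert, Finset.mem_singleton] at hz
    rcases hz with rfl | rfl | rfl
    · exact s.iseqv.refl _
    · exact h12
    · exact h13
  have hsum : gluedAngle P s z1 = ∑ q ∈ hfin.toFinset, P.angle q := by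
    rw [gluedAngle, ← finsum_mem_coe_finset, Set.Finite.coe_toFinset]
  have h3sum : ∑ q ∈ ({z1, z2, z3} : Finset (AddCircle P.L)), P.angle q = 3 * π := by
    rw [Finset.sum_insert (by simp [d12, d13]), Finset.sum_insert (by simp [d23]),
      Finset.sum_singleton, P.nonvertex_angle _ hv1, P.nonvertex_angle _ hv2,
      P.nonvertex_angle _ hv3]
    ring
  have hmono := Finset.sum_le_sum_of_subset_of_nonneg hsub
    (fun i _ _ => (P.angle_pos i).le)
  rw [h3sum] at hmono
  rw [hsum] at hle
  have hpi := Real.pi_pos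
  linarith

end AuxLemmas2
section Halving

lemma halving (P : AbstractPolygon) (s : Setoid (AddCircle P.L))
    (h : IsAleksandrovGluing P s) {a : AddCircle P.L} (ha : IsLeafClass s a) :
    ∀ t : ℝ, s.r (a + (t : AddCircle P.L)) (a - (t : AddCircle P.L)) := by
  have hL : (0:ℝ) < P.L := P.Lpos
  have cadd : ∀ x y : ℝ, ((x + y : ℝ) : AddCircle P.L)
      = (x : AddCircle P.L) + (y : AddCircle P.L) := fun x y => rfl
  have csub : ∀ x y : ℝ, ((x - y : ℝ) : AddCircle P.L)
      = (x : AddCircle P.L) - (y : AddCircle P.L) := fun x y => rfl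
  set G : Set ℝ := {t : ℝ | s.r (a + (t : AddCircle P.L)) (a - (t : AddCircle P.L))}
    with hGdef
  have hGclosed : IsClosed G := by
    have hcont : Continuous (fun t : ℝ =>
        ((a + (t : AddCircle P.L), a - (t : AddCircle P.L)) :
          AddCircle P.L × AddCircle P.L)) := by
      have hm : Continuous ((↑·) : ℝ → AddCircle P.L) := continuous_quotient_mk'
      exact Continuous.prodMk (continuous_const.add hm) (continuous_const.sub hm)
    exact (srel_isClosed P s h.sphere).preimage hcont
  obtain ⟨ε₀, hε₀pos, hfold⟩ := ha
  set K : Set ℝ := {u : ℝ | u ≤ P.L / 2 ∧ ∀ t : ℝ, 0 < t → t < u → t ∈ G} with hKdef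
  have hKne : min ε₀ (P.L / 2) ∈ K :=
    ⟨min_le_right _ _, fun t ht1 ht2 => hfold t ht1 (lt_of_lt_of_le ht2 (min_le_left _ _))⟩
  have hKbdd : BddAbove K := ⟨P.L / 2, fun u hu => hu.1⟩
  set M := sSup K with hMdef
  have hMpos : 0 < M :=
    lt_of_lt_of_le (lt_min hε₀pos (by linarith)) (le_csSup hKbdd hKne)
  have hMle : M ≤ P.L / 2 := csSup_le ⟨_, hKne⟩ (fun u hu => hu.1)
  have hMG : ∀ t : ℝ, 0 < t → t < M → t ∈ G := by
    intro t ht1 ht2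
    obtain ⟨u, huK, htu⟩ := exists_lt_of_lt_csSup ⟨_, hKne⟩ ht2
    exact huK.2 t ht1 htu
  have hMmem : M ∈ G := by
    have h1 : M ∈ closure (Ioo (0:ℝ) M) := by
      rw [closure_Ioo (ne_of_lt hMpos)]
      exact ⟨hMpos.le, le_refl _⟩
    exact closure_minimal (fun t ht => hMG t ht.1 ht.2) hGclosed h1
  have hMhalf : M = P.L / 2 := by
    by_contra hne2
    have hMlt : M < P.L / 2 := lt_of_le_of_ne hMle hne2
    obtain ⟨ε, hεpos, hfwd, _⟩ := h.length_preserving _ _ hMmem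
    set ε' := min (min ε ((P.L / 2 - M) / 2)) (M / 2) with hε'def
    have hε'pos : 0 < ε' := lt_min (lt_min hεpos (by linarith)) (by linarith)
    have hε'ε : ε' ≤ ε := le_trans (min_le_left _ _) (min_le_left _ _)
    have hε'h : ε' ≤ (P.L / 2 - M) / 2 := le_trans (min_le_left _ _) (min_le_right _ _)
    have hε'M : ε' ≤ M / 2 := min_le_right _ _
    have hex : ∃ u : ℝ, (0 < u ∧ u < ε') ∧ (M + u) ∉ G := by
      by_contra hcon
      push_neg at hcon
      have hmem : M + ε' ∈ K := by
        refine ⟨by linarith, fun t ht1 ht2 => ?_⟩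
        rcases lt_trichotomy t M with hc | hc | hc
        · exact hMG t ht1 hc
        · rw [hc]; exact hMmem
        · have hmem2 : M + (t - M) ∈ G := hcon (t - M) ⟨by linarith, by linarith⟩
          have ht' : M + (t - M) = t := by ring
          rwa [ht'] at hmem2
      have := le_csSup hKbdd hmem
      linarith
    obtain ⟨u₀, ⟨hu₀1, hu₀2⟩, hu₀G⟩ := hex
    have hO : IsOpen {u : ℝ | (M + u) ∉ G} :=
      (hGclosed.preimage (continuous_const.add continuous_id)).isOpen_compl
    obtain ⟨r, hrpos, hball⟩ := Metric.isOpen_iff.1 hO u₀ hu₀G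
    set d := min (min r (P.L / 4)) (ε' - u₀) with hddef
    have hdpos : 0 < d := lt_min (lt_min hrpos (by linarith)) (by linarith)
    have hdr : d ≤ r := le_trans (min_le_left _ _) (min_le_left _ _)
    have hdL : d ≤ P.L / 4 := le_trans (min_le_left _ _) (min_le_right _ _)
    have hdε : d ≤ ε' - u₀ := min_le_right _ _
    set J := Ioo u₀ (u₀ + d) with hJdef
    -- every u in J yields a vertex among three glued points
    have hkey : ∀ u : ℝ, u ∈ J →
        a - ((M - u : ℝ) : AddCircle P.L) ∈ P.V ∨
        a + ((M + u : ℝ) : AddCircle P.L) ∈ P.V ∨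
        a + ((M - u : ℝ) : AddCircle P.L) ∈ P.V := by
      intro u hu
      have hu1 : 0 < u := lt_trans hu₀1 hu.1
      have huε : u < ε' := by
        have := hu.2; linarith [hdε]
      have huM : u < M / 2 := lt_of_lt_of_le huε hε'M
      have hMuG : (M + u) ∉ G := by
        apply hball
        rw [Metric.mem_ball, Real.dist_eq, abs_sub_lt_iff]
        constructor
        · linarith [hu.2, hdr]
        · linarith [hu.1]
      have hA : s.r (a + ((M + u : ℝ) : AddCircle P.L))
          (a - ((M - u : ℝ) : AddCircle P.L)) := by
        rcases hfwd u hu1 (lt_of_lt_of_le huε hε'ε) with hc | hc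
        · -- same-orientation : a + M + u ~ a - M + u
          have heq1 : a + ((M:ℝ) : AddCircle P.L) + ((u:ℝ) : AddCircle P.L)
              = a + ((M + u : ℝ) : AddCircle P.L) := by rw [cadd]; abel
          have heq2 : a - ((M:ℝ) : AddCircle P.L) + ((u:ℝ) : AddCircle P.L)
              = a - ((M - u : ℝ) : AddCircle P.L) := by rw [csub]; abel
          rw [heq1, heq2] at hc
          exact hc
        · -- fold continuation would mean M + u ∈ G
          exfalso
          apply hMuG
          have heq1 : a + ((M:ℝ) : AddCircle P.L) + ((u:ℝ) : AddCircle P.L)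
              = a + ((M + u : ℝ) : AddCircle P.L) := by rw [cadd]; abel
          have heq2 : a - ((M:ℝ) : AddCircle P.L) - ((u:ℝ) : AddCircle P.L)
              = a - ((M + u : ℝ) : AddCircle P.L) := by rw [cadd]; abel
          rw [heq1, heq2] at hc
          exact hc
      have hB : s.r (a + ((M - u : ℝ) : AddCircle P.L))
          (a - ((M - u : ℝ) : AddCircle P.L)) :=
        hMG (M - u) (by linarith) (by linarith)
      -- three distinct points in the class of z3 := a - (M - u)
      have hr13 := s.iseqv.symm hA
      have hr12 := s.iseqv.symm hB
      -- distinctness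
      have d13 : a - ((M - u : ℝ) : AddCircle P.L) ≠ a + ((M + u : ℝ) : AddCircle P.L) := by
        intro hc
        have h0 : ((2 * M : ℝ) : AddCircle P.L) = 0 := by
          have hid : ((2 * M : ℝ) : AddCircle P.L) - 0
              = (a + ((M + u : ℝ) : AddCircle P.L)) - (a - ((M - u : ℝ) : AddCircle P.L)) := by
            have : ((2 * M : ℝ) : AddCircle P.L)
                = ((M + u : ℝ) : AddCircle P.L) + ((M - u : ℝ) : AddCircle P.L) := by
              have hx : (2 * M : ℝ) = (M + u) + (M - u) := by ring
              rw [hx, cadd]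
            rw [this]; abel
          exact eq_of_sub_eq_sub' hc.symm hid
        exact coe_ne_zero' hL (by linarith) (by linarith) h0
      have d12 : a - ((M - u : ℝ) : AddCircle P.L) ≠ a + ((M - u : ℝ) : AddCircle P.L) := by
        intro hc
        have h0 : ((2 * (M - u) : ℝ) : AddCircle P.L) = 0 := by
          have hid : ((2 * (M - u) : ℝ) : AddCircle P.L) - 0
              = (a + ((M - u : ℝ) : AddCircle P.L)) - (a - ((M - u : ℝ) : AddCircle P.L)) := by
            have : ((2 * (M - u) : ℝ) : AddCircle P.L)
                = ((M - u : ℝ) : AddCircle P.L) + ((M - u : ℝ) : AddCircle P.L) := by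
              have hx : (2 * (M - u) : ℝ) = (M - u) + (M - u) := by ring
              rw [hx, cadd]
            rw [this]; abel
          exact eq_of_sub_eq_sub' hc.symm hid
        exact coe_ne_zero' hL (by linarith) (by linarith) h0
      have d23 : a + ((M + u : ℝ) : AddCircle P.L) ≠ a + ((M - u : ℝ) : AddCircle P.L) := by
        intro hc
        have h0 : ((2 * u : ℝ) : AddCircle P.L) = 0 := by
          have hid : ((2 * u : ℝ) : AddCircle P.L) - 0
              = (a + ((M + u : ℝ) : AddCircle P.L)) - (a + ((M - u : ℝ) : AddCircle P.L)) := by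
            have : ((2 * u : ℝ) : AddCircle P.L)
                = ((M + u : ℝ) : AddCircle P.L) - ((M - u : ℝ) : AddCircle P.L) := by
              have hx : (2 * u : ℝ) = (M + u) - (M - u) := by ring
              rw [hx, csub]
            rw [this]; abel
          exact eq_of_sub_eq_sub' hc hid
        exact coe_ne_zero' hL (by linarith) (by linarith) h0
      exact three_class P s h hr13 hr12 d13 d12 d23
    -- finiteness contradiction
    have hsmalldiff : ∀ u v : ℝ, u ∈ J → v ∈ J →
        ((u - v : ℝ) : AddCircle P.L) = 0 → u = v := by
      intro u v hu hv h0
      refine coe_sub_eq_zero' hL h0 ?_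
      rw [abs_sub_lt_iff]
      constructor
      · linarith [hu.2, hv.1]
      · linarith [hv.2, hu.1]
    have hfinV : ∀ f : ℝ → AddCircle P.L, Set.InjOn f J →
        ({u ∈ J | f u ∈ P.V} : Set ℝ).Finite := by
      intro f hf
      apply Set.Finite.of_finite_image (f := f)
      · apply P.Vfin.subset
        rintro _ ⟨u, ⟨_, huV⟩, rfl⟩
        exact huV
      · exact hf.mono (fun u hu => hu.1)
    have hinj1 : Set.InjOn (fun u : ℝ => a - ((M - u : ℝ) : AddCircle P.L)) J := by
      intro u hu v hv hc
      refine hsmalldiff u v hu hv ?_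
      simp only at hc
      have hid : ((u - v : ℝ) : AddCircle P.L) - 0
          = (a - ((M - u : ℝ) : AddCircle P.L)) - (a - ((M - v : ℝ) : AddCircle P.L)) := by
        have : ((u - v : ℝ) : AddCircle P.L)
            = ((M - v : ℝ) : AddCircle P.L) - ((M - u : ℝ) : AddCircle P.L) := by
          have hx : (u - v : ℝ) = (M - v) - (M - u) := by ring
          rw [hx, csub]
        rw [this]; abel
      exact eq_of_sub_eq_sub' hc hid
    have hinj2 : Set.InjOn (fun u : ℝ => a + ((M + u : ℝ) : AddCircle P.L)) J := by
      intro u hu v hv hc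
      refine hsmalldiff u v hu hv ?_
      simp only at hc
      have hid : ((u - v : ℝ) : AddCircle P.L) - 0
          = (a + ((M + u : ℝ) : AddCircle P.L)) - (a + ((M + v : ℝ) : AddCircle P.L)) := by
        have : ((u - v : ℝ) : AddCircle P.L)
            = ((M + u : ℝ) : AddCircle P.L) - ((M + v : ℝ) : AddCircle P.L) := by
          have hx : (u - v : ℝ) = (M + u) - (M + v) := by ring
          rw [hx, csub]
        rw [this]; abel
      exact eq_of_sub_eq_sub' hc hid
    have hinj3 : Set.InjOn (fun u : ℝ => a + ((M - u : ℝ) : AddCircle P.L)) J := by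
      intro u hu v hv hc
      refine hsmalldiff u v hu hv ?_
      simp only at hc
      have hid : ((u - v : ℝ) : AddCircle P.L) - 0
          = (a + ((M - v : ℝ) : AddCircle P.L)) - (a + ((M - u : ℝ) : AddCircle P.L)) := by
        have : ((u - v : ℝ) : AddCircle P.L)
            = ((M - v : ℝ) : AddCircle P.L) - ((M - u : ℝ) : AddCircle P.L) := by
          have hx : (u - v : ℝ) = (M - v) - (M - u) := by ring
          rw [hx, csub]
        rw [this]; abel
      exact eq_of_sub_eq_sub' hc.symm hid
    have hcover : J ⊆ {u ∈ J | (fun u : ℝ => a - ((M - u : ℝ) : AddCircle P.L)) u ∈ P.V}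
        ∪ ({u ∈ J | (fun u : ℝ => a + ((M + u : ℝ) : AddCircle P.L)) u ∈ P.V}
          ∪ {u ∈ J | (fun u : ℝ => a + ((M - u : ℝ) : AddCircle P.L)) u ∈ P.V}) := by
      intro u hu
      rcases hkey u hu with hc | hc | hc
      · exact Or.inl ⟨hu, hc⟩
      · exact Or.inr (Or.inl ⟨hu, hc⟩)
      · exact Or.inr (Or.inr ⟨hu, hc⟩)
    have hJfin : J.Finite :=
      Set.Finite.subset ((hfinV _ hinj1).union ((hfinV _ hinj2).union (hfinV _ hinj3))) hcover
    exact Set.Ioo_infinite (by linarith) hJfin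
  -- now M = L/2
  have hhalfG : ∀ t : ℝ, 0 < t → t ≤ P.L / 2 → t ∈ G := by
    intro t ht1 ht2
    rcases lt_or_eq_of_le ht2 with hc | hc
    · exact hMG t ht1 (by rw [hMhalf]; exact hc)
    · subst hc
      show s.r _ _
      have hper : ((P.L : ℝ) : AddCircle P.L) = 0 := AddCircle.coe_period (p := P.L)
      have hsum : ((P.L / 2 : ℝ) : AddCircle P.L) + ((P.L / 2 : ℝ) : AddCircle P.L) = 0 := by
        rw [← cadd]
        have : P.L / 2 + P.L / 2 = P.L := by ring
        rw [this, hper]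
      have heq : a + ((P.L / 2 : ℝ) : AddCircle P.L) = a - ((P.L / 2 : ℝ) : AddCircle P.L) := by
        have := eq_neg_of_add_eq_zero_left hsum
        rw [sub_eq_add_neg, ← this]
      rw [heq]
  -- extend to all reals
  intro t
  set r : ℝ := t - P.L * ⌊t / P.L⌋ with hrdef
  have hfl1 : (⌊t / P.L⌋ : ℝ) * P.L ≤ t := by
    rw [← le_div_iff₀ hL]
    exact Int.floor_le _
  have hfl2 : t < ((⌊t / P.L⌋ : ℝ) + 1) * P.L := by
    rw [← div_lt_iff₀ hL]
    exact Int.lt_floor_add_one _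
  have hr0 : 0 ≤ r := by rw [hrdef]; nlinarith
  have hrL : r < P.L := by rw [hrdef]; nlinarith
  have hcoe : ((t : ℝ) : AddCircle P.L) = ((r : ℝ) : AddCircle P.L) := by
    have h0 : ((t - r : ℝ) : AddCircle P.L) = 0 := by
      rw [AddCircle.coe_eq_zero_iff]
      exact ⟨⌊t / P.L⌋, by rw [zsmul_eq_mul]; rw [hrdef]; ring⟩
    rw [csub] at h0
    have := sub_eq_zero.mp h0
    exact this
  rw [hcoe]
  rcases eq_or_lt_of_le hr0 with hc | hrpos
  · have : ((r : ℝ) : AddCircle P.L) = 0 := by rw [← hc]; rfl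
    rw [this, add_zero, sub_zero]
  rcases le_or_gt r (P.L / 2) with hle | hgt
  · exact hhalfG r hrpos hle
  · have hG2 : (P.L - r) ∈ G := hhalfG _ (by linarith) (by linarith)
    have hLr : ((P.L - r : ℝ) : AddCircle P.L) = -((r : ℝ) : AddCircle P.L) := by
      rw [csub, AddCircle.coe_period, zero_sub]
    have hrel : s.r (a + ((P.L - r : ℝ) : AddCircle P.L)) (a - ((P.L - r : ℝ) : AddCircle P.L)) := hG2
    rw [hLr, sub_neg_eq_add, ← sub_eq_add_neg] at hrel
    exact s.iseqv.symm hrel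

end Halving
/-- If an Aleksandrov gluing of a polygon has a path (`|`-shaped)
gluing tree — every node of degree at most 2, with exactly two leaves — then its two leaf
fold points split the perimeter into two arcs of equal length `L/2`, and the gluing is
exactly the identification of the two arcs by arc length: it is a perimeter-halving
gluing (`p` is glued to `q` iff `p = q` or `p + q = 2x`). -/
theorem path_gluing_is_perimeter_halving (P : AbstractPolygon)
    (s : Setoid (AddCircle P.L)) (h : IsAleksandrovGluing P s)
    (hdeg : ∀ p, treeDegree s p ≤ 2) (hleaves : HasLeaves P s 2) :
    ∃ x : AddCircle P.L, IsLeafClass s x ∧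
      IsLeafClass s (x + ((P.L / 2 : ℝ) : AddCircle P.L)) ∧
      ∀ p q : AddCircle P.L, s.r p q ↔ (p = q ∨ p + q = x + x) := by
  obtain ⟨T, hT1, _, _, hT4⟩ := hleaves
  have hTne : T.Nonempty := Finset.card_pos.1 (by rw [hT4]; norm_num)
  obtain ⟨a, haT⟩ := hTne
  have haleaf : IsLeafClass s a := hT1 a haT
  have hL : (0:ℝ) < P.L := P.Lpos
  have cadd : ∀ x y : ℝ, ((x + y : ℝ) : AddCircle P.L)
      = (x : AddCircle P.L) + (y : AddCircle P.L) := fun x y => rfl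
  have csub : ∀ x y : ℝ, ((x - y : ℝ) : AddCircle P.L)
      = (x : AddCircle P.L) - (y : AddCircle P.L) := fun x y => rfl
  have hg := halving P s h haleaf
  have hg' : ∀ z : AddCircle P.L, s.r z (a + a - z) := by
    intro z
    obtain ⟨u, hu⟩ := QuotientAddGroup.mk_surjective (z - a)
    have hu' : (u : AddCircle P.L) = z - a := hu
    have hz : z = a + (u : AddCircle P.L) := by rw [hu']; abel
    have hz2 : a + a - z = a - (u : AddCircle P.L) := by rw [hu']; abel
    rw [hz2, hz]
    exact hg u
  refine ⟨a, haleaf, ?_, ?_⟩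
  · -- leaf at a + L/2
    refine ⟨1, one_pos, fun t ht1 _ => ?_⟩
    have hhalfneg : ((P.L / 2 : ℝ) : AddCircle P.L) = -((P.L / 2 : ℝ) : AddCircle P.L) := by
      apply eq_neg_of_add_eq_zero_left
      rw [← cadd]
      have hx : (P.L / 2 + P.L / 2 : ℝ) = P.L := by ring
      rw [hx]
      exact AddCircle.coe_period (p := P.L)
    have h1 : a + ((P.L / 2 : ℝ) : AddCircle P.L) + ((t : ℝ) : AddCircle P.L)
        = a + ((P.L / 2 + t : ℝ) : AddCircle P.L) := by rw [cadd]; abel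
    have h2 : a + ((P.L / 2 : ℝ) : AddCircle P.L) - ((t : ℝ) : AddCircle P.L)
        = a - ((P.L / 2 + t : ℝ) : AddCircle P.L) := by
      rw [cadd]
      nth_rewrite 1 [hhalfneg]
      abel
    rw [h1, h2]
    exact hg _
  · intro p q
    constructor
    · -- forward direction
      intro hr
      by_contra hcon
      push_neg at hcon
      obtain ⟨hne1, hne2⟩ := hcon
      obtain ⟨ε, hεpos, hfwd, _⟩ := h.length_preserving p q hr
      set δ := min ε (P.L / 4) with hδdef
      have hδpos : 0 < δ := lt_min hεpos (by linarith)
      have hδε : δ ≤ ε := min_le_left _ _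
      have hδL : δ ≤ P.L / 4 := min_le_right _ _
      set I := Ioo (0:ℝ) δ with hIdef
      have hsmalldiff : ∀ u v : ℝ, u ∈ I → v ∈ I →
          ((u - v : ℝ) : AddCircle P.L) = 0 → u = v := by
        intro u v hu hv h0
        refine coe_sub_eq_zero' hL h0 ?_
        rw [abs_sub_lt_iff]
        constructor
        · linarith [hu.2, hv.1]
        · linarith [hv.2, hu.1]
      have hfinV : ∀ f : ℝ → AddCircle P.L, Set.InjOn f I →
          ({u ∈ I | f u ∈ P.V} : Set ℝ).Finite := by
        intro f hf
        apply Set.Finite.of_finite_image (f := f)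
        · apply P.Vfin.subset
          rintro _ ⟨u, ⟨_, huV⟩, rfl⟩
          exact huV
        · exact hf.mono (fun u hu => hu.1)
      -- injectivity of the four maps
      have hinjA : ∀ z : AddCircle P.L, Set.InjOn (fun u : ℝ => z + ((u:ℝ) : AddCircle P.L)) I := by
        intro z u hu v hv hc
        simp only at hc
        refine hsmalldiff u v hu hv ?_
        have hid : ((u - v : ℝ) : AddCircle P.L) - 0
            = (z + ((u:ℝ) : AddCircle P.L)) - (z + ((v:ℝ) : AddCircle P.L)) := by
          rw [csub]; abel
        exact eq_of_sub_eq_sub' hc hid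
      have hinjS : ∀ z : AddCircle P.L, Set.InjOn (fun u : ℝ => z - ((u:ℝ) : AddCircle P.L)) I := by
        intro z u hu v hv hc
        simp only at hc
        refine hsmalldiff u v hu hv ?_
        have hid : ((u - v : ℝ) : AddCircle P.L) - 0
            = (z - ((v:ℝ) : AddCircle P.L)) - (z - ((u:ℝ) : AddCircle P.L)) := by
          rw [csub]; abel
        exact eq_of_sub_eq_sub' hc.symm hid
      -- the doubling solution sets are subsingletons
      have hfin2 : ∀ z : AddCircle P.L,
          ({u ∈ I | ((2 * u : ℝ) : AddCircle P.L) = z} : Set ℝ).Finite := by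
        intro z
        apply Set.Subsingleton.finite
        rintro u ⟨huI, hu⟩ v ⟨hvI, hv⟩
        have h0 : ((2 * u - 2 * v : ℝ) : AddCircle P.L) = 0 := by
          rw [csub, hu, hv, sub_self]
        have h2uv : 2 * u = 2 * v := by
          refine coe_sub_eq_zero' hL h0 ?_
          rw [abs_sub_lt_iff]
          constructor
          · linarith [huI.2, hvI.1]
          · linarith [hvI.2, huI.1]
        linarith
      set B1 : Set ℝ := {u ∈ I | (fun u : ℝ => p + ((u:ℝ) : AddCircle P.L)) u ∈ P.V} with hB1
      set B2 : Set ℝ := {u ∈ I | (fun u : ℝ => (a + a - p) - ((u:ℝ) : AddCircle P.L)) u ∈ P.V} with hB2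
      set B3 : Set ℝ := {u ∈ I | (fun u : ℝ => q + ((u:ℝ) : AddCircle P.L)) u ∈ P.V} with hB3
      set B4 : Set ℝ := {u ∈ I | (fun u : ℝ => q - ((u:ℝ) : AddCircle P.L)) u ∈ P.V} with hB4
      set B5 : Set ℝ := {u ∈ I | ((2 * u : ℝ) : AddCircle P.L) = q - p} with hB5
      set B6 : Set ℝ := {u ∈ I | ((2 * u : ℝ) : AddCircle P.L) = a + a - p - q} with hB6
      set B7 : Set ℝ := {u ∈ I | ((2 * u : ℝ) : AddCircle P.L) = a + a - p - p} with hB7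
      have hBfin : (B1 ∪ (B2 ∪ (B3 ∪ (B4 ∪ (B5 ∪ (B6 ∪ B7)))))).Finite := by
        refine ((hfinV _ (hinjA p)).union ?_)
        refine ((hfinV _ (hinjS (a + a - p))).union ?_)
        refine ((hfinV _ (hinjA q)).union ?_)
        refine ((hfinV _ (hinjS q)).union ?_)
        exact ((hfin2 _).union ((hfin2 _).union (hfin2 _)))
      have hIinf : I.Infinite := Set.Ioo_infinite hδpos
      obtain ⟨t, htmem⟩ := (hIinf.diff hBfin).nonempty
      obtain ⟨htI, htB⟩ := htmem
      simp only [Set.mem_union, not_or] at htB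
      obtain ⟨htB1, htB2, htB3, htB4, htB5, htB6, htB7⟩ := htB
      have ht1 : 0 < t := htI.1
      have ht2 : t < δ := htI.2
      -- the three glued points
      have hw12 : s.r (p + ((t:ℝ) : AddCircle P.L)) ((a + a - p) - ((t:ℝ) : AddCircle P.L)) := by
        have := hg' (p + ((t:ℝ) : AddCircle P.L))
        have heq : a + a - (p + ((t:ℝ) : AddCircle P.L))
            = (a + a - p) - ((t:ℝ) : AddCircle P.L) := by abel
        rwa [heq] at this
      have hd12 : p + ((t:ℝ) : AddCircle P.L) ≠ (a + a - p) - ((t:ℝ) : AddCircle P.L) := by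
        intro hc
        apply htB7
        refine ⟨htI, ?_⟩
        have hid : ((2 * t : ℝ) : AddCircle P.L) - (a + a - p - p)
            = (p + ((t:ℝ) : AddCircle P.L)) - ((a + a - p) - ((t:ℝ) : AddCircle P.L)) := by
          have hx : ((2 * t : ℝ) : AddCircle P.L)
              = ((t:ℝ) : AddCircle P.L) + ((t:ℝ) : AddCircle P.L) := by
            have hy : (2 * t : ℝ) = t + t := by ring
            rw [hy, cadd]
          rw [hx]; abel
        exact eq_of_sub_eq_sub' hc hid
      rcases hfwd t ht1 (lt_of_lt_of_le ht2 hδε) with hw13 | hw13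
      · -- w3 = q + t
        have hd13 : p + ((t:ℝ) : AddCircle P.L) ≠ q + ((t:ℝ) : AddCircle P.L) := by
          intro hc
          exact hne1 (by
            have hid : p - q = (p + ((t:ℝ) : AddCircle P.L)) - (q + ((t:ℝ) : AddCircle P.L)) := by abel
            exact eq_of_sub_eq_sub' hc hid)
        have hd23 : (a + a - p) - ((t:ℝ) : AddCircle P.L) ≠ q + ((t:ℝ) : AddCircle P.L) := by
          intro hc
          apply htB6
          refine ⟨htI, ?_⟩
          have hid : ((2 * t : ℝ) : AddCircle P.L) - (a + a - p - q)
              = (q + ((t:ℝ) : AddCircle P.L)) - ((a + a - p) - ((t:ℝ) : AddCircle P.L)) := by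
            have hx : ((2 * t : ℝ) : AddCircle P.L)
                = ((t:ℝ) : AddCircle P.L) + ((t:ℝ) : AddCircle P.L) := by
              have hy : (2 * t : ℝ) = t + t := by ring
              rw [hy, cadd]
            rw [hx]; abel
          exact eq_of_sub_eq_sub' hc.symm hid
        rcases three_class P s h hw12 hw13 hd12 hd13 hd23 with hv | hv | hv
        · exact htB1 ⟨htI, hv⟩
        · exact htB2 ⟨htI, hv⟩
        · exact htB3 ⟨htI, hv⟩
      · -- w3 = q - t
        have hd13 : p + ((t:ℝ) : AddCircle P.L) ≠ q - ((t:ℝ) : AddCircle P.L) := by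
          intro hc
          apply htB5
          refine ⟨htI, ?_⟩
          have hid : ((2 * t : ℝ) : AddCircle P.L) - (q - p)
              = (p + ((t:ℝ) : AddCircle P.L)) - (q - ((t:ℝ) : AddCircle P.L)) := by
            have hx : ((2 * t : ℝ) : AddCircle P.L)
                = ((t:ℝ) : AddCircle P.L) + ((t:ℝ) : AddCircle P.L) := by
              have hy : (2 * t : ℝ) = t + t := by ring
              rw [hy, cadd]
            rw [hx]; abel
          exact eq_of_sub_eq_sub' hc hid
        have hd23 : (a + a - p) - ((t:ℝ) : AddCircle P.L) ≠ q - ((t:ℝ) : AddCircle P.L) := by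
          intro hc
          apply hne2
          have hid : (p + q) - (a + a)
              = (q - ((t:ℝ) : AddCircle P.L)) - ((a + a - p) - ((t:ℝ) : AddCircle P.L)) := by abel
          exact eq_of_sub_eq_sub' hc.symm hid
        rcases three_class P s h hw12 hw13 hd12 hd13 hd23 with hv | hv | hv
        · exact htB1 ⟨htI, hv⟩
        · exact htB2 ⟨htI, hv⟩
        · exact htB4 ⟨htI, hv⟩
    · -- backward direction
      rintro (rfl | hpq)
      · exact s.iseqv.refl _
      · have hq : q = a + a - p := by
          have hid : q - (a + a - p) = (p + q) - (a + a) := by abel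
          exact eq_of_sub_eq_sub' hpq hid
        rw [hq]
        exact hg' p
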